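/- Permuted product codes are bivariate linear operator codes (Theorem 1.2, encoding equality): Let F_q be a finite field, ℓ1, ℓ2 ∈ GA(q) affine polynomials of coprime orders s and n respectively, and α, β ∈ F_q with ℓ1(α) ≠ α and ℓ2(β) ≠ β. Define L_j : F_q[X,Y] → F_q[X,Y] by L_j(p)(X,Y) = p(ℓ1^j(X), ℓ2^j(Y)) for j ∈ {0,…,s−1}. Then for every p ∈ F_q[X,Y], every i ∈ {0,…,n−1} and every j ∈ {0,…,s−1}, L_j(p)(α, ℓ2^{is}(β)) = p(ℓ1^{is+j}(α), ℓ2^{is+j}(β)). Consequently, the encoding of p by the bivariate linear operator code with family 𝓛 = (L_0,…,L_{s−1}) and evaluation set A = ((α, ℓ2^{is}(β)))_{i=0}^{n−1} coincides, coordinate by coordinate, with the permuted product code encoding of p. -/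

import Mathlib

/-! `L_j` is the `j`-th iterate of a substitution, so evaluating `L_j p` at `(x, y)` is
evaluating `p` at `(ℓ1^j x, ℓ2^j y)`. Since `ℓ1^s = id`, `ℓ1^{is+j} α = ℓ1^j α`, while
`ℓ2^{is+j} β = ℓ2^j (ℓ2^{is} β)`. -/

open MvPolynomial

noncomputable section

/-- The affine map `x ↦ a*x + b` on `F`. -/
def affMap (F : Type) [Field F] (a b : F) : F → F := fun x => a * x + b

/-- The substitution operator `p(X,Y) ↦ p(ℓ1(X), ℓ2(Y))` on `F[X,Y]`, for
`ℓ1 = a1·X + b1` and `ℓ2 = a2·Y + b2`. -/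
def ppcOp (F : Type) [Field F] (a1 b1 a2 b2 : F) :
    MvPolynomial (Fin 2) F →ₐ[F] MvPolynomial (Fin 2) F :=
  MvPolynomial.aeval ![C a1 * X 0 + C b1, C a2 * X 1 + C b2]

/-- The operator `L_j : p(X,Y) ↦ p(ℓ1^j(X), ℓ2^j(Y))`, as the `j`-fold iterate of the
substitution operator. -/
def ppcL (F : Type) [Field F] (a1 b1 a2 b2 : F) (j : ℕ) :
    MvPolynomial (Fin 2) F → MvPolynomial (Fin 2) F :=
  (⇑(ppcOp F a1 b1 a2 b2))^[j]

/-- `ℓ` has order `s`: `s` is the least positive integer with `ℓ^s = id`. -/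
def AffOrder (F : Type) [Field F] (f : F → F) (s : ℕ) : Prop :=
  0 < s ∧ f^[s] = id ∧ ∀ i, 0 < i → i < s → f^[i] ≠ id

lemma MvPolynomial.eval_aeval {σ τ R : Type*} [CommSemiring R] (v : τ → R)
    (g : σ → MvPolynomial τ R) (p : MvPolynomial σ R) :
    eval v (aeval g p) = eval (fun i => eval v (g i)) p := by
  rw [aeval_eq_bind₁]
  exact eval₂Hom_bind₁ _ _ _ _

lemma eval_ppcOp {F : Type} [Field F] (a1 b1 a2 b2 : F) (v : Fin 2 → F)
    (p : MvPolynomial (Fin 2) F) :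
    eval v (ppcOp F a1 b1 a2 b2 p) = eval ![a1 * v 0 + b1, a2 * v 1 + b2] p := by
  rw [ppcOp, MvPolynomial.eval_aeval]
  congr 2
  funext i
  fin_cases i <;> simp

lemma eval_ppcL {F : Type} [Field F] (a1 b1 a2 b2 : F) (j : ℕ) (x y : F)
    (p : MvPolynomial (Fin 2) F) :
    eval ![x, y] (ppcL F a1 b1 a2 b2 j p)
      = eval ![(affMap F a1 b1)^[j] x, (affMap F a2 b2)^[j] y] p := by
  induction j generalizing x y with
  | zero => rfl
  | succ j ih =>
    rw [ppcL, Function.iterate_succ_apply', ← ppcL, eval_ppcOp]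
    exact ih (affMap F a1 b1 x) (affMap F a2 b2 y)

lemma Function.iterate_mul_add_of_iterate_eq_id {α : Type*} {f : α → α} {s : ℕ}
    (h : f^[s] = id) (i j : ℕ) : f^[i * s + j] = f^[j] := by
  rw [Function.iterate_add, mul_comm, Function.iterate_mul, h, Function.iterate_id,
    Function.id_comp]

theorem ppc_is_BLO_general
    {F : Type} [Field F] {s n : ℕ}
    (a1 b1 a2 b2 : F)
    (hord1 : AffOrder F (affMap F a1 b1) s)
    (α β : F) :
    ∀ (p : MvPolynomial (Fin 2) F) (i : Fin n) (j : Fin s),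
      eval ![α, (affMap F a2 b2)^[(i : ℕ) * s] β] (ppcL F a1 b1 a2 b2 (j : ℕ) p)
        = eval ![(affMap F a1 b1)^[(i : ℕ) * s + (j : ℕ)] α,
                 (affMap F a2 b2)^[(i : ℕ) * s + (j : ℕ)] β] p := by
  intro p i j
  rw [eval_ppcL, Function.iterate_mul_add_of_iterate_eq_id hord1.2.1, add_comm,
    Function.iterate_add_apply]

/-- Permuted product codes are bivariate linear operator codes: the `B-LO` encoding
of `p` with family `𝓛 = (L_0,…,L_{s-1})`, `L_j(p) = p(ℓ1^j(X), ℓ2^j(Y))`, at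
evaluation points `(α, ℓ2^{is}(β))` coincides coordinate by coordinate with the
permuted product code encoding of `p`. -/
theorem ppc_is_BLO
    {F : Type} [Field F] [Fintype F] {s n : ℕ}
    (a1 b1 a2 b2 : F) (ha1 : a1 ≠ 0) (ha2 : a2 ≠ 0)
    (hord1 : AffOrder F (affMap F a1 b1) s)
    (hord2 : AffOrder F (affMap F a2 b2) n)
    (hcop : Nat.Coprime s n)
    (α β : F)
    (hα : affMap F a1 b1 α ≠ α) (hβ : affMap F a2 b2 β ≠ β) :
    ∀ (p : MvPolynomial (Fin 2) F) (i : Fin n) (j : Fin s),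
      eval ![α, (affMap F a2 b2)^[(i : ℕ) * s] β] (ppcL F a1 b1 a2 b2 (j : ℕ) p)
        = eval ![(affMap F a1 b1)^[(i : ℕ) * s + (j : ℕ)] α,
                 (affMap F a2 b2)^[(i : ℕ) * s + (j : ℕ)] β] p :=
  ppc_is_BLO_general a1 b1 a2 b2 hord1 α β
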